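/- arXiv:1405.2320 — 2 statements merged into one kernel-verified Lean document; each statement's English description precedes it below -/
import Mathlib

section
/- Let (Z, ν) be a measure space with 0 < ν(Z) < ∞, and let (Aₙ)ₙ∈ℕ be a sequence of measurable subsets of Z such that there exists a constant c > 0 with ν(Aₙ ∩ Aₘ) ≤ c·ν(Aₙ)·ν(Aₘ) for all distinct n, m ∈ ℕ. Then ν(limsupₙ Aₙ) > 0 if and only if the series ∑_{n∈ℕ} ν(Aₙ) diverges. -/
/-!
Cauchy–Schwarz applied to the counting function `∑ k ∈ F, 1_{A k}`, which lives on
`⋃ k ∈ F, A k`, gives the Chung–Erdős inequality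
`(∑ ν (A k))² ≤ ν (⋃ A k) * ∑ j, ∑ k, ν (A j ∩ A k)`. Quasi-independence bounds the double sum
by `T + c T²` with `T = ∑ ν (A k)`, so any finite block of total mass `T ≥ 1` covers a set of
measure at least `(1 + c)⁻¹`. If the series diverges, every tail contains such a block, so every
`⋃ k ≥ n, A k` has measure at least `(1 + c)⁻¹`, and by continuity from above so does the limsup.
The converse is the first Borel–Cantelli lemma.
-/

open MeasureTheory Filter Set ENNReal

theorem ENNReal.tsum_nat_add_eq_top {f : ℕ → ℝ≥0∞} (hf : ∑' k, f k = ⊤) {n : ℕ}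
    (hf_ne_top : ∀ k < n, f k ≠ ⊤) : ∑' k, f (k + n) = ⊤ := by
  rw [← ENNReal.summable.sum_add_tsum_nat_add', ENNReal.add_eq_top] at hf
  exact hf.resolve_left (ENNReal.sum_ne_top.mpr fun k hk ↦ hf_ne_top k (Finset.mem_range.mp hk))

section

variable {α : Type*} [MeasurableSpace α] {μ : Measure α}

theorem sq_lintegral_le_measure_univ_mul_lintegral_sq {f : α → ℝ≥0∞} (hf : AEMeasurable f μ) :
    (∫⁻ x, f x ∂μ) ^ 2 ≤ μ univ * ∫⁻ x, f x ^ 2 ∂μ := by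
  have holder := ENNReal.lintegral_mul_le_Lp_mul_Lq μ Real.HolderConjugate.two_two hf
    (aemeasurable_const (b := 1))
  simp only [Pi.mul_apply, mul_one, ENNReal.one_rpow, lintegral_const, one_mul] at holder
  calc (∫⁻ x, f x ∂μ) ^ 2
      ≤ ((∫⁻ x, f x ^ (2 : ℝ) ∂μ) ^ (1 / 2 : ℝ) * μ univ ^ (1 / 2 : ℝ)) ^ 2 := by gcongr
    _ = μ univ * ∫⁻ x, f x ^ 2 ∂μ := by
      rw [mul_pow, ← ENNReal.rpow_natCast, ← ENNReal.rpow_natCast (μ univ ^ _),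
        ← ENNReal.rpow_mul, ← ENNReal.rpow_mul]
      norm_num [mul_comm]

variable {ι : Type*}

-- The Chung–Erdős inequality.
theorem sq_sum_measure_le_measure_biUnion_mul_sum_measure_inter {A : ι → Set α}
    (hA : ∀ k, MeasurableSet (A k)) (F : Finset ι) :
    (∑ k ∈ F, μ (A k)) ^ 2 ≤ μ (⋃ k ∈ F, A k) * ∑ j ∈ F, ∑ k ∈ F, μ (A j ∩ A k) := by
  set U := ⋃ k ∈ F, A k
  set f : α → ℝ≥0∞ := fun x ↦ ∑ k ∈ F, (A k).indicator 1 x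
  have hf : Measurable f := Finset.measurable_sum _ fun k _ ↦ measurable_one.indicator (hA k)
  have hf_sq : ∀ x, f x ^ 2 = ∑ j ∈ F, ∑ k ∈ F, (A j ∩ A k).indicator 1 x := fun x ↦ by
    simp only [f, sq, Finset.sum_mul_sum, Set.inter_indicator_one, Pi.mul_apply]
  have h_int : ∫⁻ x, f x ∂μ.restrict U = ∑ k ∈ F, μ (A k) := by
    rw [lintegral_finsetSum _ fun k _ ↦ measurable_one.indicator (hA k)]
    refine Finset.sum_congr rfl fun k hk ↦ ?_
    rw [lintegral_indicator_one (hA k), Measure.restrict_apply (hA k),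
      inter_eq_left.mpr (Finset.subset_set_biUnion_of_mem hk)]
  have h_int_sq : ∫⁻ x, f x ^ 2 ∂μ = ∑ j ∈ F, ∑ k ∈ F, μ (A j ∩ A k) := by
    simp_rw [hf_sq]
    rw [lintegral_finsetSum _ fun j _ ↦ Finset.measurable_sum _
      fun k _ ↦ measurable_one.indicator ((hA j).inter (hA k))]
    refine Finset.sum_congr rfl fun j _ ↦ ?_
    rw [lintegral_finsetSum _ fun k _ ↦ measurable_one.indicator ((hA j).inter (hA k))]
    simp only [lintegral_indicator_one ((hA j).inter (hA _))]
  calc (∑ k ∈ F, μ (A k)) ^ 2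
      = (∫⁻ x, f x ∂μ.restrict U) ^ 2 := by rw [h_int]
    _ ≤ μ.restrict U univ * ∫⁻ x, f x ^ 2 ∂μ.restrict U :=
      sq_lintegral_le_measure_univ_mul_lintegral_sq hf.aemeasurable
    _ ≤ μ U * ∑ j ∈ F, ∑ k ∈ F, μ (A j ∩ A k) := by
      rw [Measure.restrict_apply_univ, ← h_int_sq]
      gcongr
      exact Measure.restrict_le_self

theorem sum_sum_measure_inter_le_of_quasi_independent {A : ι → Set α} {c : ℝ≥0∞}
    (hquasi : ∀ j k, j ≠ k → μ (A j ∩ A k) ≤ c * μ (A j) * μ (A k)) (F : Finset ι) :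
    ∑ j ∈ F, ∑ k ∈ F, μ (A j ∩ A k) ≤ ∑ k ∈ F, μ (A k) + c * (∑ k ∈ F, μ (A k)) ^ 2 := by
  classical
  have h_term (j k : ι) :
      μ (A j ∩ A k) ≤ (if j = k then μ (A j) else 0) + c * μ (A j) * μ (A k) := by
    by_cases hjk : j = k
    · subst hjk
      simp
    · simpa [hjk] using hquasi j k hjk
  calc ∑ j ∈ F, ∑ k ∈ F, μ (A j ∩ A k)
      ≤ ∑ j ∈ F, ∑ k ∈ F, ((if j = k then μ (A j) else 0) + c * μ (A j) * μ (A k)) := by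
        gcongr with j _ k _
        exact h_term j k
    _ = ∑ k ∈ F, μ (A k) + c * (∑ k ∈ F, μ (A k)) ^ 2 := by
        simp only [Finset.sum_add_distrib, Finset.sum_ite_eq]
        rw [sq, Finset.sum_mul_sum, Finset.mul_sum]
        congr 1
        · exact Finset.sum_congr rfl fun j hj ↦ by simp [hj]
        · simp only [Finset.mul_sum, mul_assoc]

theorem inv_one_add_le_measure_biUnion_of_quasi_independent [IsFiniteMeasure μ] {A : ι → Set α}
    (hA : ∀ k, MeasurableSet (A k)) {c : ℝ≥0∞}
    (hquasi : ∀ j k, j ≠ k → μ (A j ∩ A k) ≤ c * μ (A j) * μ (A k)) {F : Finset ι}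
    (hF : 1 ≤ ∑ k ∈ F, μ (A k)) :
    (1 + c)⁻¹ ≤ μ (⋃ k ∈ F, A k) := by
  set T := ∑ k ∈ F, μ (A k)
  set U := ⋃ k ∈ F, A k
  have hT_sq_ne_zero : T ^ 2 ≠ 0 := pow_ne_zero _ (zero_lt_one.trans_le hF).ne'
  have hT_sq_ne_top : T ^ 2 ≠ ⊤ :=
    pow_ne_top (ENNReal.sum_ne_top.mpr fun k _ ↦ measure_ne_top μ (A k))
  have h_sq_le : 1 * T ^ 2 ≤ (μ U * (1 + c)) * T ^ 2 :=
    calc 1 * T ^ 2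
        ≤ μ U * ∑ j ∈ F, ∑ k ∈ F, μ (A j ∩ A k) := by
          rw [one_mul]
          exact sq_sum_measure_le_measure_biUnion_mul_sum_measure_inter hA F
      _ ≤ μ U * (T + c * T ^ 2) := by
          gcongr
          exact sum_sum_measure_inter_le_of_quasi_independent hquasi F
      _ ≤ (μ U * (1 + c)) * T ^ 2 := by
          rw [mul_assoc, add_mul, one_mul]
          gcongr
          calc T = T * 1 := (mul_one T).symm
            _ ≤ T ^ 2 := by rw [sq]; gcongr
  have h_one_le : 1 ≤ μ U * (1 + c) :=
    (ENNReal.mul_le_mul_iff_left hT_sq_ne_zero hT_sq_ne_top).mp h_sq_le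
  calc (1 + c)⁻¹ ≤ μ U * (1 + c) * (1 + c)⁻¹ := le_mul_of_one_le_left' h_one_le
    _ ≤ μ U := by
      rw [mul_assoc]
      exact mul_le_of_le_one_right' (ENNReal.mul_inv_le_one _)

theorem inv_one_add_le_measure_iUnion_of_quasi_independent [IsFiniteMeasure μ] {A : ι → Set α}
    (hA : ∀ k, MeasurableSet (A k)) {c : ℝ≥0∞}
    (hquasi : ∀ j k, j ≠ k → μ (A j ∩ A k) ≤ c * μ (A j) * μ (A k))
    (hsum : ∑' k, μ (A k) = ⊤) :
    (1 + c)⁻¹ ≤ μ (⋃ k, A k) := by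
  rw [ENNReal.tsum_eq_iSup_sum] at hsum
  obtain ⟨F, hF⟩ := lt_iSup_iff.mp (hsum ▸ one_lt_top)
  calc (1 + c)⁻¹ ≤ μ (⋃ k ∈ F, A k) :=
        inv_one_add_le_measure_biUnion_of_quasi_independent hA hquasi hF.le
    _ ≤ μ (⋃ k, A k) := measure_mono (iUnion₂_subset fun k _ ↦ subset_iUnion A k)

theorem inv_one_add_le_measure_limsup_of_quasi_independent [IsFiniteMeasure μ] {A : ℕ → Set α}
    (hA : ∀ k, MeasurableSet (A k)) {c : ℝ≥0∞}
    (hquasi : ∀ j k, j ≠ k → μ (A j ∩ A k) ≤ c * μ (A j) * μ (A k))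
    (hsum : ∑' k, μ (A k) = ⊤) :
    (1 + c)⁻¹ ≤ μ (limsup A atTop) := by
  have h_tail (n : ℕ) : (1 + c)⁻¹ ≤ μ (⋃ k, A (k + n)) :=
    inv_one_add_le_measure_iUnion_of_quasi_independent (fun k ↦ hA (k + n))
      (fun j k hjk ↦ hquasi _ _ (by omega))
      (ENNReal.tsum_nat_add_eq_top hsum fun k _ ↦ measure_ne_top μ (A k))
  have h_anti : Antitone fun n ↦ ⋃ k, A (k + n) := fun m n hmn ↦
    iUnion_subset fun k ↦ subset_iUnion_of_subset (k + (n - m)) <| by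
      rw [show k + (n - m) + m = k + n by omega]
  rw [limsup_eq_iInf_iSup_of_nat']
  simp only [iSup_eq_iUnion, iInf_eq_iInter]
  rw [h_anti.measure_iInter (fun n ↦ (MeasurableSet.iUnion fun k ↦ hA (k + n)).nullMeasurableSet)
    ⟨0, measure_ne_top μ _⟩]
  exact le_iInf h_tail

end

theorem quasi_independent_borel_cantelli_general {Z : Type*} [MeasurableSpace Z]
    (ν : Measure Z) [IsFiniteMeasure ν]
    (A : ℕ → Set Z) (hA : ∀ n, MeasurableSet (A n))
    (c : ℝ)
    (hquasi : ∀ n m : ℕ, n ≠ m → ν (A n ∩ A m) ≤ ENNReal.ofReal c * ν (A n) * ν (A m)) :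
    0 < ν (Filter.limsup A Filter.atTop) ↔ (∑' n, ν (A n)) = ⊤ := by
  refine ⟨fun hpos ↦ ?_, fun hsum ↦ ?_⟩
  · by_contra hsum
    exact hpos.ne' (measure_limsup_atTop_eq_zero hsum)
  · have hc_inv_pos : 0 < (1 + ENNReal.ofReal c)⁻¹ := by simp
    exact hc_inv_pos.trans_le (inv_one_add_le_measure_limsup_of_quasi_independent hA hquasi hsum)

theorem quasi_independent_borel_cantelli {Z : Type*} [MeasurableSpace Z]
    (ν : Measure Z) [IsFiniteMeasure ν] (hν : ν ≠ 0)
    (A : ℕ → Set Z) (hA : ∀ n, MeasurableSet (A n))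
    (c : ℝ) (hc : 0 < c)
    (hquasi : ∀ n m : ℕ, n ≠ m → ν (A n ∩ A m) ≤ ENNReal.ofReal c * ν (A n) * ν (A m)) :
    0 < ν (Filter.limsup A Filter.atTop) ↔ (∑' n, ν (A n)) = ⊤ :=
  quasi_independent_borel_cantelli_general ν A hA c hquasi
end

section
/- Let a, b be positive integers. If the equation x² − a·y² − b·z² = 0 has no nonzero integer solution (x, y, z), then the equation x² − a·y² − b·z² + a·b·t² = 0 has no nonzero integer solution (x, y, z, t). -/
theorem anisotropy_quaternion_norm_form (a b : ℤ) (ha : 0 < a) (hb : 0 < b)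
    (h : ∀ x y z : ℤ, x ^ 2 - a * y ^ 2 - b * z ^ 2 = 0 → x = 0 ∧ y = 0 ∧ z = 0) :
    ∀ x y z t : ℤ, x ^ 2 - a * y ^ 2 - b * z ^ 2 + a * b * t ^ 2 = 0 →
      x = 0 ∧ y = 0 ∧ z = 0 ∧ t = 0 := by
  intro x y z t heq
  have key : (x*z + a*y*t) ^ 2 - a * (x*t + y*z) ^ 2 - b * (z^2 - a*t^2) ^ 2 = 0 := by
    linear_combination (z^2 - a*t^2) * heq
  obtain ⟨_, _, hw⟩ := h _ _ _ key
  have hzt : z = 0 ∧ t = 0 ∧ (0:ℤ) = 0 := h z t 0 (by linear_combination hw)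
  have hxy : x = 0 ∧ y = 0 ∧ (0:ℤ) = 0 := h x y 0 (by linear_combination heq + b*z*hzt.1 - a*b*t*hzt.2.1)
  exact ⟨hxy.1, hxy.2.1, hzt.1, hzt.2.1⟩
end
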